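/- (Comparability of stopping data across CZ intervals) With 𝒥 a finite collection of dyadic intervals, K ≥ 1, and CZ_K(𝒥) as above, for any h ∈ L^∞ with compact support: sup_{J∈𝒥} inf_J M h ≲ sup_{G∈CZ_K(𝒥)} inf_G M h ≲ K²·sup_{J∈𝒥} inf_J M h, where M is the Hardy–Littlewood maximal function and the implicit constants are absolute. -/

import Mathlib

/-- A dyadic interval `[2^k n, 2^k (n+1))` in the standard dyadic grid on `ℝ`. -/
structure DyadicInterval where
  k : ℤ
  n : ℤ
deriving DecidableEq

namespace DyadicInterval

noncomputable def len (I : DyadicInterval) : ℝ := (2 : ℝ) ^ I.k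
noncomputable def left (I : DyadicInterval) : ℝ := (2 : ℝ) ^ I.k * I.n
noncomputable def set (I : DyadicInterval) : Set ℝ := Set.Ico I.left (I.left + I.len)
/-- The `κ`-th dyadic parent. -/
def parent (κ : ℕ) (I : DyadicInterval) : DyadicInterval := ⟨I.k + κ, Int.fdiv I.n (2 ^ κ)⟩

end DyadicInterval
namespace DyadicInterval
noncomputable def center (I : DyadicInterval) : ℝ := I.left + I.len / 2
/-- The `λ`-dilate `λI` of an interval (same center, `λ` times the length). -/
noncomputable def dilate (I : DyadicInterval) (lam : ℝ) : Set ℝ :=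
  Set.Ioo (I.center - lam * I.len / 2) (I.center + lam * I.len / 2)
end DyadicInterval

/-- `G` is admissible for the Whitney-type collection: `9K²G` contains no `J ∈ 𝒥`. -/
def czProp (K : ℝ) (𝒥 : Finset DyadicInterval) (G : DyadicInterval) : Prop :=
  ∀ J ∈ 𝒥, ¬ J.set ⊆ G.dilate (9 * K ^ 2)

/-- The Calderón–Zygmund collection `CZ_K(𝒥)`: maximal admissible dyadic intervals. -/
def CZ (K : ℝ) (𝒥 : Finset DyadicInterval) : Set DyadicInterval :=
  {G | czProp K 𝒥 G ∧ ∀ G' : DyadicInterval, czProp K 𝒥 G' → G.set ⊆ G'.set → G' = G}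

open MeasureTheory ENNReal

/-- The Hardy–Littlewood maximal function (over intervals centered at `x`). -/
noncomputable def hlMax (f : ℝ → ℂ) (x : ℝ) : ℝ≥0∞ :=
  ⨆ (r : ℝ) (_ : 0 < r),
    (ENNReal.ofReal (2 * r))⁻¹ * ∫⁻ y in Set.Ioo (x - r) (x + r), (‖f y‖₊ : ℝ≥0∞)

/-- Bounded, compactly supported, measurable functions. -/
def Nice (f : ℝ → ℂ) : Prop :=
  Measurable f ∧ (∃ B, ∀ x, ‖f x‖ ≤ B) ∧ ∃ R, ∀ x, R < |x| → f x = 0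

/-!
Every `J ∈ 𝒥` fails to be admissible while its small dyadic descendants are admissible, so walking
up the dyadic tower from such a descendant to `J` yields a maximal admissible `G ⊆ J`: the left
inequality holds with constant `1`.

For the right inequality, maximality of `G ∈ CZ_K(𝒥)` means that its parent is not admissible, so
some `J ∈ 𝒥` lies within distance `10 K² |G|` of `G`. At scales `r > |G|` an average of `|h|`
around a point of `G` is bounded, by doubling, by `O(K²)` times an average around any `y ∈ J`.
At scales `r ≤ |G|` only `h` on the tripled interval `3G` is seen, and the weak type `(1, 1)`
inequality (Vitali covering) provides a point of `G` where the maximal function of `h 1_{3G}` is at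
most `5 ∫_{3G} |h| / |G|`, which is again `O(K²) M h(y)`.
-/

namespace DyadicInterval

lemma len_pos (I : DyadicInterval) : 0 < I.len := zpow_pos two_pos _

lemma mem_set_iff {I : DyadicInterval} {x : ℝ} : x ∈ I.set ↔ ⌊x / I.len⌋ = I.n := by
  rw [Int.floor_eq_iff, le_div_iff₀ I.len_pos, div_lt_iff₀ I.len_pos]
  simp only [set, left, Set.mem_Ico, len]
  constructor <;> rintro ⟨h₁, h₂⟩ <;> constructor <;> linarith

lemma set_nonempty (I : DyadicInterval) : I.set.Nonempty :=
  ⟨I.left, le_rfl, lt_add_of_pos_right _ I.len_pos⟩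

lemma eq_of_mem_of_mem {I I' : DyadicInterval} {x : ℝ} (hx : x ∈ I.set) (hx' : x ∈ I'.set)
    (hk : I.k = I'.k) : I = I' := by
  rw [mem_set_iff] at hx hx'
  have hn : I.n = I'.n := by rw [← hx, ← hx', len, len, hk]
  cases I; cases I'; simp_all

lemma parent_zero (I : DyadicInterval) : parent 0 I = I := by
  simp [parent]

lemma len_parent (d : ℕ) (I : DyadicInterval) : (parent d I).len = I.len * (2 ^ d : ℕ) := by
  simp [len, parent, zpow_add₀]

lemma mem_parent {I : DyadicInterval} {x : ℝ} (d : ℕ) (hx : x ∈ I.set) :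
    x ∈ (parent d I).set := by
  rw [mem_set_iff] at hx ⊢
  rw [len_parent, ← div_div, Int.floor_div_natCast, hx, parent,
    Int.fdiv_eq_ediv_of_nonneg _ (by positivity)]
  push_cast; rfl

lemma set_subset_parent (d : ℕ) (I : DyadicInterval) : I.set ⊆ (parent d I).set :=
  fun _ => mem_parent d

lemma parent_parent (a b : ℕ) (I : DyadicInterval) : parent a (parent b I) = parent (b + a) I := by
  obtain ⟨x, hx⟩ := I.set_nonempty
  exact eq_of_mem_of_mem (mem_parent a (mem_parent b hx)) (mem_parent _ hx)
    (by simp only [parent]; push_cast; ring)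

lemma set_subset_parent_of_le (I : DyadicInterval) {m d : ℕ} (h : m ≤ d) :
    (parent m I).set ⊆ (parent d I).set := by
  obtain ⟨e, rfl⟩ := Nat.exists_eq_add_of_le h
  rw [← parent_parent]
  exact set_subset_parent _ _

lemma len_le_of_subset {I I' : DyadicInterval} (h : I.set ⊆ I'.set) : I.len ≤ I'.len := by
  have := measure_mono (μ := volume) h
  simp only [set, Real.volume_Ico, add_sub_cancel_left] at this
  exact (ENNReal.ofReal_le_ofReal_iff I'.len_pos.le).mp this

lemma exists_eq_parent_of_subset {I I' : DyadicInterval} (h : I.set ⊆ I'.set) :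
    ∃ d : ℕ, I' = parent d I := by
  have hk : I.k ≤ I'.k := by
    simpa [len, zpow_le_zpow_iff_right₀ (by norm_num : (1 : ℝ) < 2)] using len_le_of_subset h
  obtain ⟨x, hx⟩ := I.set_nonempty
  exact ⟨(I'.k - I.k).toNat, eq_of_mem_of_mem (h hx) (mem_parent _ hx) (by simp [parent]; omega)⟩

lemma parent_one_subset_of_subset {I I' : DyadicInterval} (h : I.set ⊆ I'.set) (hne : I' ≠ I) :
    (parent 1 I).set ⊆ I'.set := by
  obtain ⟨d, rfl⟩ := exists_eq_parent_of_subset h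
  rcases d with _ | e
  · exact absurd (parent_zero I) hne
  · exact set_subset_parent_of_le I (by omega)

lemma dilate_mono {I I' : DyadicInterval} {lam : ℝ} (h : I.set ⊆ I'.set) (hlam : 1 ≤ lam) :
    I.dilate lam ⊆ I'.dilate lam := by
  obtain ⟨h₁, h₂⟩ := (Set.Ico_subset_Ico_iff (lt_add_of_pos_right _ I.len_pos)).mp h
  have := I.len_pos
  apply Set.Ioo_subset_Ioo <;> simp only [center] <;> nlinarith

lemma set_subset_dilate (I : DyadicInterval) {lam : ℝ} (hlam : 1 < lam) : I.set ⊆ I.dilate lam := by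
  rintro x ⟨h₁, h₂⟩
  have := I.len_pos
  constructor <;> simp only [center] <;> nlinarith

lemma len_le_of_set_subset_dilate {I J : DyadicInterval} {lam : ℝ} (h : J.set ⊆ I.dilate lam) :
    J.len ≤ lam * I.len := by
  have := measure_mono (μ := volume) h
  simp only [set, dilate, Real.volume_Ico, Real.volume_Ioo, add_sub_cancel_left] at this
  refine (ENNReal.ofReal_le_ofReal_iff'.mp this).resolve_right J.len_pos.not_ge |>.trans_eq ?_
  ring

variable {K : ℝ} {𝒥 : Finset DyadicInterval}

lemma czProp_anti (hK : 1 ≤ K) {I I' : DyadicInterval} (h : czProp K 𝒥 I')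
    (hsub : I.set ⊆ I'.set) : czProp K 𝒥 I :=
  fun J hJ hJI => h J hJ (hJI.trans (dilate_mono hsub (by nlinarith)))

lemma not_czProp_of_mem (hK : 1 ≤ K) {J : DyadicInterval} (hJ : J ∈ 𝒥) : ¬ czProp K 𝒥 J :=
  fun h => h J hJ (J.set_subset_dilate (by nlinarith))

lemma czProp_of_forall_lt_len {I : DyadicInterval} (h : ∀ J ∈ 𝒥, 9 * K ^ 2 * I.len < J.len) :
    czProp K 𝒥 I :=
  fun J hJ hJI => (h J hJ).not_ge (len_le_of_set_subset_dilate hJI)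

lemma exists_czProp_parent_eq {J : DyadicInterval} (hJ : J ∈ 𝒥) :
    ∃ G₀ d, czProp K 𝒥 G₀ ∧ parent d G₀ = J := by
  -- `G₀ ⊆ J` sits at a level `k₀` so low that `9K²G₀` is shorter than every member of `𝒥`
  set kmin := 𝒥.inf' ⟨J, hJ⟩ (·.k)
  obtain ⟨m, hm⟩ := pow_unbounded_of_one_lt (9 * K ^ 2) (by norm_num : (1 : ℝ) < 2)
  set k₀ := min J.k (kmin - m)
  set d := (J.k - k₀).toNat
  refine ⟨⟨k₀, J.n * 2 ^ d⟩, d, czProp_of_forall_lt_len fun J' hJ' => ?_, ?_⟩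
  · have h₁ : (2 : ℝ) ^ k₀ ≤ 2 ^ (kmin - m) := zpow_le_zpow_right₀ one_le_two (min_le_right _ _)
    have h₂ : (2 : ℝ) ^ kmin ≤ 2 ^ J'.k := zpow_le_zpow_right₀ one_le_two (𝒥.inf'_le _ hJ')
    have h₃ : (2 : ℝ) ^ kmin = 2 ^ m * 2 ^ (kmin - m) := by
      rw [← zpow_natCast, ← zpow_add₀ two_ne_zero]; ring_nf
    simp only [len]
    nlinarith [zpow_pos (two_pos (α := ℝ)) (kmin - m), zpow_pos (two_pos (α := ℝ)) k₀]
  · simp only [parent, Int.mul_fdiv_cancel _ (pow_ne_zero _ two_ne_zero)]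
    congr
    omega

lemma exists_mem_CZ_subset (hK : 1 ≤ K) {J : DyadicInterval} (hJ : J ∈ 𝒥) :
    ∃ G ∈ CZ K 𝒥, G.set ⊆ J.set := by
  classical
  obtain ⟨G₀, d, hG₀, rfl⟩ := exists_czProp_parent_eq (K := K) hJ
  have hex : ∃ m, ¬ czProp K 𝒥 (parent m G₀) := ⟨d, not_czProp_of_mem hK hJ⟩
  obtain ⟨m, hm⟩ : ∃ m, Nat.find hex = m + 1 :=
    Nat.exists_eq_add_one_of_ne_zero fun h => Nat.find_spec hex (by rwa [h, parent_zero])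
  have hbad : ¬ czProp K 𝒥 (parent 1 (parent m G₀)) := by
    rw [parent_parent, ← hm]; exact Nat.find_spec hex
  refine ⟨parent m G₀, ⟨not_not.mp (Nat.find_min hex (m := m) (by omega)), fun G' hG' hsub => ?_⟩,
    set_subset_parent_of_le G₀ (by have := Nat.find_min' hex (not_czProp_of_mem hK hJ); omega)⟩
  by_contra hne
  exact hbad (czProp_anti hK hG' (parent_one_subset_of_subset hsub hne))

lemma exists_mem_abs_sub_left_le_of_mem_CZ (hK : 1 ≤ K) {G : DyadicInterval} (hG : G ∈ CZ K 𝒥) :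
    ∃ J ∈ 𝒥, ∀ y ∈ J.set, |y - G.left| ≤ 10 * K ^ 2 * G.len := by
  have hpar : ¬ czProp K 𝒥 (parent 1 G) := fun h => by
    simpa [parent] using congrArg k (hG.2 _ h (set_subset_parent 1 G))
  simp only [czProp, not_forall, not_not] at hpar
  obtain ⟨J, hJ, hJP⟩ := hpar
  refine ⟨J, hJ, fun y hy => ?_⟩
  obtain ⟨hy₁, hy₂⟩ := hJP hy
  obtain ⟨h₁, h₂⟩ :=
    (Set.Ico_subset_Ico_iff (lt_add_of_pos_right _ G.len_pos)).mp (set_subset_parent 1 G)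
  simp only [center, len_parent, pow_one, Nat.cast_ofNat] at hy₁ hy₂ h₂
  have : G.len ≤ K ^ 2 * G.len := le_mul_of_one_le_left G.len_pos.le (by nlinarith)
  rw [abs_le]
  constructor <;> linarith

end DyadicInterval

noncomputable def intervalAvg (f : ℝ → ℂ) (x r : ℝ) : ℝ≥0∞ :=
  (ENNReal.ofReal (2 * r))⁻¹ * ∫⁻ y in Set.Ioo (x - r) (x + r), (‖f y‖₊ : ℝ≥0∞)

lemma mul_volume_le_of_lt_lintegral_Ioo (φ : ℝ → ℝ≥0∞) {E : Set ℝ} {r : ℝ → ℝ} {R : ℝ}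
    {lam : ℝ≥0∞} (hr : ∀ x ∈ E, 0 < r x) (hR : ∀ x ∈ E, r x ≤ R)
    (hlam : ∀ x ∈ E, lam * ENNReal.ofReal (2 * r x) < ∫⁻ y in Set.Ioo (x - r x) (x + r x), φ y) :
    lam * volume E ≤ 4 * ∫⁻ y, φ y := by
  obtain ⟨u, hu_sub, hu_disj, hu_cov⟩ :=
    Vitali.exists_disjoint_subfamily_covering_enlargement_closedBall E id r R hR 4 (by norm_num)
  have hdisj : u.PairwiseDisjoint fun b => Set.Ioo (b - r b) (b + r b) :=
    hu_disj.mono fun b => by simpa [Real.closedBall_eq_Icc] using Set.Ioo_subset_Icc_self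
  have hcount : u.Countable := hdisj.countable_of_isOpen (fun _ _ => isOpen_Ioo)
    fun b hb => Set.nonempty_Ioo.mpr (by linarith [hr b (hu_sub hb)])
  have : Countable u := hcount.to_subtype
  have hcov : E ⊆ ⋃ b ∈ u, Metric.closedBall b (4 * r b) := fun x hx => by
    obtain ⟨b, hb, hxb⟩ := hu_cov x hx
    exact Set.mem_biUnion hb (hxb (Metric.mem_closedBall_self (hr x hx).le))
  calc lam * volume E ≤ lam * ∑' b : u, 4 * ENNReal.ofReal (2 * r b) := by
        gcongr
        refine (measure_mono hcov).trans ((measure_biUnion_le volume hcount _).trans_eq ?_)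
        congr! 2 with b
        rw [Real.volume_closedBall, ← ENNReal.ofReal_ofNat 4, ← ENNReal.ofReal_mul (by norm_num)]
        ring_nf
    _ = 4 * ∑' b : u, lam * ENNReal.ofReal (2 * r b) := by
        rw [ENNReal.tsum_mul_left, ENNReal.tsum_mul_left]; ring
    _ ≤ 4 * ∑' b : u, ∫⁻ y in Set.Ioo (b - r b) (b + r b), φ y := by
        gcongr with b
        exact (hlam b (hu_sub b.2)).le
    _ = 4 * ∫⁻ y in ⋃ b : u, Set.Ioo (b - r b) (b + r b), φ y := by
        rw [lintegral_iUnion (fun _ => measurableSet_Ioo) hdisj.subtype]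
    _ ≤ 4 * ∫⁻ y, φ y := by grw [setLIntegral_le_lintegral]

section MaximalFunction

variable (f : ℝ → ℂ)

lemma hlMax_eq_iSup_intervalAvg (x : ℝ) : hlMax f x = ⨆ (r : ℝ) (_ : 0 < r), intervalAvg f x r :=
  rfl

lemma intervalAvg_le_hlMax (x : ℝ) {r : ℝ} (hr : 0 < r) : intervalAvg f x r ≤ hlMax f x :=
  le_iSup₂ (f := fun r (_ : 0 < r) => intervalAvg f x r) r hr

lemma lintegral_Ioo_le_mul_hlMax (x : ℝ) {r : ℝ} (hr : 0 < r) :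
    ∫⁻ y in Set.Ioo (x - r) (x + r), (‖f y‖₊ : ℝ≥0∞) ≤ ENNReal.ofReal (2 * r) * hlMax f x :=
  (ENNReal.inv_mul_le_iff (by simp [hr]) ENNReal.ofReal_ne_top).mp (intervalAvg_le_hlMax f x hr)

lemma intervalAvg_le_of_abs_sub_le {x y D r : ℝ} (hD : |x - y| ≤ D) (hr : 0 < r) :
    intervalAvg f x r ≤ ENNReal.ofReal ((D + r) / r) * hlMax f y := by
  obtain ⟨h₁, h₂⟩ := abs_le.mp hD
  have hsub : Set.Ioo (x - r) (x + r) ⊆ Set.Ioo (y - (D + r)) (y + (D + r)) :=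
    Set.Ioo_subset_Ioo (by linarith) (by linarith)
  have hfac : (ENNReal.ofReal (2 * r))⁻¹ * ENNReal.ofReal (2 * (D + r)) =
      ENNReal.ofReal ((D + r) / r) := by
    rw [← ENNReal.ofReal_inv_of_pos (by positivity), ← ENNReal.ofReal_mul (by positivity)]
    congr 1
    field_simp
  calc intervalAvg f x r
      ≤ (ENNReal.ofReal (2 * r))⁻¹ * (ENNReal.ofReal (2 * (D + r)) * hlMax f y) := by
        unfold intervalAvg
        gcongr
        exact (lintegral_mono_set hsub).trans
          (lintegral_Ioo_le_mul_hlMax f y (by linarith [abs_nonneg (x - y)]))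
    _ = ENNReal.ofReal ((D + r) / r) * hlMax f y := by rw [← mul_assoc, hfac]

lemma intervalAvg_indicator {N : Set ℝ} {x r : ℝ}
    (hsub : Set.Ioo (x - r) (x + r) ⊆ N) : intervalAvg (N.indicator f) x r = intervalAvg f x r := by
  unfold intervalAvg
  congr 1
  refine setLIntegral_congr_fun measurableSet_Ioo fun y hy => ?_
  rw [Set.indicator_of_mem (hsub hy)]

lemma exists_lt_lintegral_of_lt_hlMax {lam : ℝ≥0∞} {x : ℝ} (h : lam < hlMax f x) :
    ∃ r > 0, lam * ENNReal.ofReal (2 * r) < ∫⁻ y in Set.Ioo (x - r) (x + r), (‖f y‖₊ : ℝ≥0∞) := by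
  obtain ⟨r, hr, hlt⟩ : ∃ r, ∃ _ : 0 < r, lam < intervalAvg f x r := by
    simpa only [hlMax_eq_iSup_intervalAvg, lt_iSup_iff] using h
  refine ⟨r, hr, ?_⟩
  rwa [intervalAvg, ← ENNReal.div_eq_inv_mul,
    ENNReal.lt_div_iff_mul_lt (Or.inl (by simp [hr])) (Or.inl ENNReal.ofReal_ne_top)] at hlt

lemma mul_volume_setOf_lt_hlMax_le (lam : ℝ≥0∞) :
    lam * volume {x | lam < hlMax f x} ≤ 4 * ∫⁻ y, (‖f y‖₊ : ℝ≥0∞) := by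
  set T := ∫⁻ y, (‖f y‖₊ : ℝ≥0∞)
  rcases eq_or_ne T ⊤ with hT | hT
  · simp [hT]
  rcases eq_or_ne lam 0 with rfl | hlam
  · simp
  choose! r hr hlt using fun x (hx : lam < hlMax f x) => exists_lt_lintegral_of_lt_hlMax f hx
  refine mul_volume_le_of_lt_lintegral_Ioo _ hr (R := (T / lam).toReal) (fun x hx => ?_) hlt
  have h2r : ENNReal.ofReal (2 * r x) ≤ T / lam := by
    rw [ENNReal.le_div_iff_mul_le (Or.inl hlam) (Or.inr hT), mul_comm]
    exact (hlt x hx).le.trans (setLIntegral_le_lintegral _ _)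
  have := (ENNReal.ofReal_le_iff_le_toReal (ENNReal.div_ne_top hT hlam)).mp h2r
  linarith [hr x hx]

lemma exists_mem_Ico_hlMax_le (a : ℝ) {ℓ : ℝ} (hℓ : 0 < ℓ) :
    ∃ x ∈ Set.Ico a (a + ℓ),
      hlMax f x ≤ 5 * (∫⁻ y, (‖f y‖₊ : ℝ≥0∞)) / ENNReal.ofReal ℓ := by
  set T := ∫⁻ y, (‖f y‖₊ : ℝ≥0∞)
  have ha : a ∈ Set.Ico a (a + ℓ) := ⟨le_rfl, by linarith⟩
  rcases eq_or_ne T 0 with hT₀ | hT₀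
  · refine ⟨a, ha, iSup₂_le fun r _ => ?_⟩
    calc intervalAvg f a r ≤ (ENNReal.ofReal (2 * r))⁻¹ * T := by
          unfold intervalAvg; grw [setLIntegral_le_lintegral]
      _ = 5 * T / ENNReal.ofReal ℓ := by simp [hT₀]
  rcases eq_or_ne T ⊤ with hT | hT
  · exact ⟨a, ha, by simp [hT, ENNReal.mul_top, ENNReal.top_div_of_ne_top]⟩
  by_contra! hlt
  have h54 : 5 * T ≤ 4 * T :=
    calc 5 * T = 5 * T / ENNReal.ofReal ℓ * volume (Set.Ico a (a + ℓ)) := by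
          rw [Real.volume_Ico, add_sub_cancel_left,
            ENNReal.div_mul_cancel (by simp [hℓ]) ENNReal.ofReal_ne_top]
      _ ≤ 5 * T / ENNReal.ofReal ℓ * volume {x | 5 * T / ENNReal.ofReal ℓ < hlMax f x} := by
          gcongr
          exact hlt
      _ ≤ 4 * T := mul_volume_setOf_lt_hlMax_le f _
  exact absurd ((ENNReal.mul_le_mul_iff_left hT₀ hT).mp h54) (by norm_num)

lemma exists_mem_Ico_hlMax_le_mul (a : ℝ) {ℓ D y : ℝ} (hℓ : 0 < ℓ) (hy : |y - a| ≤ D) :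
    ∃ x ∈ Set.Ico a (a + ℓ),
      hlMax f x ≤ ENNReal.ofReal (10 * (D + 2 * ℓ) / ℓ) * hlMax f y := by
  set N := Set.Ioo (a - ℓ) (a + 2 * ℓ)
  obtain ⟨x, ⟨hx₁, hx₂⟩, hMx⟩ := exists_mem_Ico_hlMax_le (N.indicator f) a hℓ
  obtain ⟨hy₁, hy₂⟩ := abs_le.mp hy
  have hmass : ∫⁻ z, (‖N.indicator f z‖₊ : ℝ≥0∞) ≤
      ENNReal.ofReal (2 * (D + 2 * ℓ)) * hlMax f y :=
    calc ∫⁻ z, (‖N.indicator f z‖₊ : ℝ≥0∞) = ∫⁻ z in N, (‖f z‖₊ : ℝ≥0∞) := by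
          rw [← lintegral_indicator measurableSet_Ioo]
          congr 1 with z
          rw [Set.indicator_apply, Set.indicator_apply]
          split_ifs <;> simp
      _ ≤ ∫⁻ z in Set.Ioo (y - (D + 2 * ℓ)) (y + (D + 2 * ℓ)), (‖f z‖₊ : ℝ≥0∞) :=
          lintegral_mono_set (Set.Ioo_subset_Ioo (by linarith) (by linarith))
      _ ≤ _ := lintegral_Ioo_le_mul_hlMax f y (by linarith [abs_nonneg (y - a)])
  refine ⟨x, ⟨hx₁, hx₂⟩, iSup₂_le fun r hr => ?_⟩
  rcases le_or_gt r ℓ with hrℓ | hrℓ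
  · -- at small scales only `f` on `N` is seen, and `x` was chosen to be good for it
    calc intervalAvg f x r = intervalAvg (N.indicator f) x r :=
          (intervalAvg_indicator f (Set.Ioo_subset_Ioo (by linarith) (by linarith))).symm
      _ ≤ 5 * (∫⁻ z, (‖N.indicator f z‖₊ : ℝ≥0∞)) / ENNReal.ofReal ℓ :=
          (intervalAvg_le_hlMax _ x hr).trans hMx
      _ ≤ 5 * (ENNReal.ofReal (2 * (D + 2 * ℓ)) * hlMax f y) / ENNReal.ofReal ℓ := by
          gcongr
      _ = ENNReal.ofReal (10 * (D + 2 * ℓ) / ℓ) * hlMax f y := by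
          have e : ENNReal.ofReal (10 * (D + 2 * ℓ) / ℓ) =
              5 * ENNReal.ofReal (2 * (D + 2 * ℓ)) / ENNReal.ofReal ℓ := by
            rw [← ENNReal.ofReal_ofNat 5, ← ENNReal.ofReal_mul (by norm_num),
              ← ENNReal.ofReal_div_of_pos hℓ]
            ring_nf
          rw [e, div_eq_mul_inv, div_eq_mul_inv]
          ring
  · calc intervalAvg f x r ≤ ENNReal.ofReal ((D + ℓ + r) / r) * hlMax f y :=
          intervalAvg_le_of_abs_sub_le f (abs_le.mpr ⟨by linarith, by linarith⟩) hr
      _ ≤ ENNReal.ofReal (10 * (D + 2 * ℓ) / ℓ) * hlMax f y := by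
          gcongr ENNReal.ofReal ?_ * _
          rw [div_le_div_iff₀ (by linarith) hℓ]
          nlinarith

end MaximalFunction

/-- comparability of stopping data across CZ intervals:
`sup_{J∈𝒥} inf_J M h ≲ sup_{G∈CZ_K(𝒥)} inf_G M h ≲ K² sup_{J∈𝒥} inf_J M h`. -/
theorem stmt17 :
    ∃ C₁ C₂ : ℝ, 0 < C₁ ∧ 0 < C₂ ∧
      ∀ K : ℝ, 1 ≤ K → ∀ 𝒥 : Finset DyadicInterval, 𝒥.Nonempty →
      ∀ h : ℝ → ℂ, Nice h →
        ((⨆ J ∈ 𝒥, ⨅ x ∈ DyadicInterval.set J, hlMax h x) ≤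
            ENNReal.ofReal C₁ * ⨆ G ∈ CZ K 𝒥, ⨅ x ∈ DyadicInterval.set G, hlMax h x) ∧
        ((⨆ G ∈ CZ K 𝒥, ⨅ x ∈ DyadicInterval.set G, hlMax h x) ≤
            ENNReal.ofReal (C₂ * K ^ 2) *
              ⨆ J ∈ 𝒥, ⨅ x ∈ DyadicInterval.set J, hlMax h x) := by
  refine ⟨1, 120, one_pos, by norm_num, fun K hK 𝒥 _ h _ => ⟨?_, ?_⟩⟩
  · rw [ENNReal.ofReal_one, one_mul]
    refine iSup₂_le fun J hJ => ?_
    obtain ⟨G, hG, hGJ⟩ := DyadicInterval.exists_mem_CZ_subset hK hJ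
    exact (biInf_mono hGJ).trans (le_iSup₂_of_le G hG le_rfl)
  · refine iSup₂_le fun G hG => ?_
    obtain ⟨J, hJ, hJG⟩ := DyadicInterval.exists_mem_abs_sub_left_le_of_mem_CZ hK hG
    have hc : ENNReal.ofReal (120 * K ^ 2) ≠ 0 := (ENNReal.ofReal_pos.mpr (by positivity)).ne'
    have hconst : 10 * (10 * K ^ 2 * G.len + 2 * G.len) / G.len ≤ 120 * K ^ 2 := by
      have : G.len ≤ K ^ 2 * G.len := le_mul_of_one_le_left G.len_pos.le (by nlinarith)
      rw [div_le_iff₀ G.len_pos]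
      linarith
    calc ⨅ x ∈ G.set, hlMax h x ≤ ⨅ y ∈ J.set, ENNReal.ofReal (120 * K ^ 2) * hlMax h y :=
          le_iInf₂ fun y hy => by
            obtain ⟨x, hx, hxy⟩ := exists_mem_Ico_hlMax_le_mul h G.left G.len_pos (hJG y hy)
            exact (iInf₂_le x (show x ∈ G.set from hx)).trans
              (hxy.trans (by gcongr ENNReal.ofReal ?_ * _))
      _ = ENNReal.ofReal (120 * K ^ 2) * ⨅ y ∈ J.set, hlMax h y := by
          simp_rw [ENNReal.mul_iInf_of_ne hc ENNReal.ofReal_ne_top]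
      _ ≤ _ := by grw [← le_iSup₂_of_le J hJ le_rfl]
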